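/- Correctness of a single speculative sampling step: Let S be a finite nonempty type and let p, q : S → ℝ be probability mass functions on S with p ≠ q. Then for every x ∈ S, p x * min(1, q x / p x) + (∑_{z ∈ S} p z * (1 − min(1, q z / p z))) * (max(0, q x − p x) / ∑_{z ∈ S} max(0, q z − p z)) = q x; that is, the output of the speculative step (accept the draft token, or reject and resample from the adjusted distribution) is distributed exactly according to the target q. Real division by zero is taken to equal zero. -/

import Mathlib

/-! Accepting with probability `min 1 (q x / p x)` leaves acceptance mass `min (p x) (q x)` at `x`,
and the rejected mass `∑ z, max 0 (p z - q z)` equals the residual mass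
`∑ z, max 0 (q z - p z)` because both distributions sum to `1`. Resampling the rejected mass from
the normalized residual therefore adds back exactly `max 0 (q x - p x) = q x - min (p x) (q x)`. -/

open Finset

section LinearOrderedAddCommGroup

variable {α : Type*} [AddCommGroup α] [LinearOrder α] [IsOrderedAddMonoid α]

theorem max_zero_sub_eq_sub_min (a b : α) : max 0 (a - b) = a - min a b := by
  rw [← max_sub_sub_left, sub_self]

theorem min_add_max_zero_sub (a b : α) : min a b + max 0 (b - a) = b := by
  rw [max_zero_sub_eq_sub_min, min_comm, add_sub_cancel]

theorem sum_max_zero_sub_comm {ι : Type*} {s : Finset ι} {f g : ι → α}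
    (h : ∑ i ∈ s, f i = ∑ i ∈ s, g i) :
    ∑ i ∈ s, max 0 (f i - g i) = ∑ i ∈ s, max 0 (g i - f i) := by
  simp only [max_zero_sub_eq_sub_min, sum_sub_distrib, h, min_comm]

end LinearOrderedAddCommGroup

section LinearOrderedField

variable {K : Type*} [Field K] [LinearOrder K] [IsStrictOrderedRing K]

theorem mul_min_one_div {a b : K} (ha : 0 ≤ a) (hb : 0 ≤ b) : a * min 1 (b / a) = min a b := by
  rcases ha.eq_or_lt with rfl | ha
  · simp [min_eq_left hb]
  · rw [mul_min_of_nonneg _ _ ha.le, mul_one, mul_div_cancel₀ _ ha.ne']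

theorem mul_one_sub_min_one_div {a b : K} (ha : 0 ≤ a) (hb : 0 ≤ b) :
    a * (1 - min 1 (b / a)) = max 0 (a - b) := by
  rw [mul_one_sub, mul_min_one_div ha hb, max_zero_sub_eq_sub_min]

/-- At `∑ j, f j = 0` both sides vanish, since every `f i` is a nonnegative summand. -/
theorem sum_mul_div_sum_of_nonneg {ι : Type*} [Fintype ι] {f : ι → K} (hf : ∀ i, 0 ≤ f i)
    (i : ι) : (∑ j, f j) * (f i / ∑ j, f j) = f i :=
  mul_div_cancel_of_imp' fun h ↦ (sum_eq_zero_iff_of_nonneg fun j _ ↦ hf j).mp h i (mem_univ i)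

end LinearOrderedField

theorem speculative_step_correct_general {S : Type*} [Fintype S]
    (p q : S → ℝ) (hp : ∀ x, 0 ≤ p x) (hq : ∀ x, 0 ≤ q x)
    (hpsum : ∑ x, p x = 1) (hqsum : ∑ x, q x = 1) (x : S) :
    p x * min 1 (q x / p x) +
        (∑ z, p z * (1 - min 1 (q z / p z))) *
          (max 0 (q x - p x) / ∑ z, max 0 (q z - p z)) =
      q x := by
  simp only [mul_min_one_div (hp _) (hq _), mul_one_sub_min_one_div (hp _) (hq _)]
  rw [sum_max_zero_sub_comm (hpsum.trans hqsum.symm),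
    sum_mul_div_sum_of_nonneg (fun z ↦ le_max_left 0 (q z - p z)), min_add_max_zero_sub]

/-- Correctness of a single speculative sampling step: the output is distributed
exactly according to the target `q`. -/
theorem speculative_step_correct {S : Type*} [Fintype S] [Nonempty S]
    (p q : S → ℝ) (hp : ∀ x, 0 ≤ p x) (hq : ∀ x, 0 ≤ q x)
    (hpsum : ∑ x, p x = 1) (hqsum : ∑ x, q x = 1) (hpq : p ≠ q) (x : S) :
    p x * min 1 (q x / p x) +
        (∑ z, p z * (1 - min 1 (q z / p z))) *
          (max 0 (q x - p x) / ∑ z, max 0 (q z - p z)) =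
      q x :=
  speculative_step_correct_general p q hp hq hpsum hqsum x
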